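/- The map z_g ↦ β((θ₂(u₀)-θ₂(0))/(θ₁(0)(θ₁(0)+θ₂(0))))(e^{θ₁(0)(d-z_g)} + (θ₁(0)/θ₂(0))e^{-θ₂(0)(d-z_g)}) - 1/r + (β/θ₂(0))e^{-θ₂(0)(d-z_g)} is strictly increasing on [d,∞) and its value at z_g = d equals ξ₂(β) = (βu₀-1)/r + β/θ₂(u₀). -/

import Mathlib

open Real Set

noncomputable def th1 (μ σ r u : ℝ) : ℝ := (Real.sqrt ((μ - u)^2 + 2*r*σ^2) + (μ - u)) / σ^2
noncomputable def th2 (μ σ r u : ℝ) : ℝ := (Real.sqrt ((μ - u)^2 + 2*r*σ^2) - (μ - u)) / σ^2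

noncomputable def xi2 (μ σ r u₀ β : ℝ) : ℝ := (β * u₀ - 1) / r + β / th2 μ σ r u₀

noncomputable def rhsC (μ σ r u₀ β d zg : ℝ) : ℝ :=
  β * ((th2 μ σ r u₀ - th2 μ σ r 0) / (th1 μ σ r 0 * (th1 μ σ r 0 + th2 μ σ r 0))) *
      (Real.exp (th1 μ σ r 0 * (d - zg)) + th1 μ σ r 0 / th2 μ σ r 0 * Real.exp (-(th2 μ σ r 0) * (d - zg))) -
    1 / r + β / th2 μ σ r 0 * Real.exp (-(th2 μ σ r 0) * (d - zg))

/-!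
`θ₂(u)` is the positive root of `σ²θ²/2 + (μ - u)θ - r` and `θ₁θ₂ = 2r/σ²`. On `z ≥ d` the bracket
`e^{θ₁(d-z)} + (θ₁/θ₂)e^{-θ₂(d-z)}` has derivative `θ₁(e^{θ₂(z-d)} - e^{θ₁(d-z)}) ≥ 0`, its
coefficient is positive because `θ₂` increases in `u`, and the last term is strictly increasing.
At `z = d` both exponentials equal `1`, and the two identities turn the value into `ξ₂(β)`.
-/

lemma lt_sqrt_sq_add {c : ℝ} (hc : 0 < c) (m : ℝ) : m < √(m ^ 2 + c) :=
  Real.lt_sqrt_of_sq_lt (lt_add_of_pos_right _ hc)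

lemma neg_lt_sqrt_sq_add {c : ℝ} (hc : 0 < c) (m : ℝ) : -m < √(m ^ 2 + c) := by
  simpa only [neg_sq] using lt_sqrt_sq_add hc (-m)

lemma strictAnti_sqrt_sq_add_sub {c : ℝ} (hc : 0 < c) :
    StrictAnti fun m : ℝ => √(m ^ 2 + c) - m := by
  intro n m hnm
  have hs := Real.sq_sqrt (by positivity : 0 ≤ m ^ 2 + c)
  have ht := Real.sq_sqrt (by positivity : 0 ≤ n ^ 2 + c)
  have hms := lt_sqrt_sq_add hc m
  have hnt := lt_sqrt_sq_add hc n
  have hst : 0 ≤ √(m ^ 2 + c) + √(n ^ 2 + c) := by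
    linarith [neg_lt_sqrt_sq_add hc m, Real.sqrt_nonneg (n ^ 2 + c)]
  set s := √(m ^ 2 + c)
  set t := √(n ^ 2 + c)
  -- `s² - t² = (m - n)(m + n)` and `m + n < s + t`
  have key : (s - t) * (s + t) < (m - n) * (s + t) := by
    nlinarith [mul_lt_mul_of_pos_left (add_lt_add hms hnt) (sub_pos.2 hnm)]
  have := lt_of_mul_lt_mul_right key hst
  show s - m < t - n
  linarith

section Roots

variable {μ σ r : ℝ}

lemma th1_pos (hσ : σ ≠ 0) (hr : 0 < r) (u : ℝ) : 0 < th1 μ σ r u :=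
  div_pos (neg_lt_iff_pos_add.1 (neg_lt_sqrt_sq_add (by positivity) _)) (by positivity)

lemma th2_pos (hσ : σ ≠ 0) (hr : 0 < r) (u : ℝ) : 0 < th2 μ σ r u :=
  div_pos (sub_pos.2 (lt_sqrt_sq_add (by positivity) _)) (by positivity)

lemma th1_mul_th2 (hσ : σ ≠ 0) (hr : 0 ≤ r) (u : ℝ) :
    th1 μ σ r u * th2 μ σ r u = 2 * r / σ ^ 2 := by
  have hsq := Real.sq_sqrt (by positivity : 0 ≤ (μ - u) ^ 2 + 2 * r * σ ^ 2)
  rw [th1, th2]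
  field_simp
  linear_combination hsq

lemma r_div_th2 (hσ : σ ≠ 0) (hr : 0 < r) (u : ℝ) :
    r / th2 μ σ r u = σ ^ 2 * th2 μ σ r u / 2 + (μ - u) := by
  have hsq := Real.sq_sqrt (by positivity : 0 ≤ (μ - u) ^ 2 + 2 * r * σ ^ 2)
  rw [div_eq_iff (th2_pos hσ hr u).ne', th2]
  set s := √((μ - u) ^ 2 + 2 * r * σ ^ 2)
  field_simp
  linear_combination -hsq

lemma th2_strictMono (hσ : σ ≠ 0) (hr : 0 < r) : StrictMono (th2 μ σ r) :=
  ((strictAnti_sqrt_sq_add_sub (by positivity)).comp fun _ _ h => sub_lt_sub_left h μ).div_const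
    (by positivity)

end Roots

lemma strictMonoOn_exp_add_exp {a b : ℝ} (ha : 0 < a) (hb : 0 < b) (d : ℝ) :
    StrictMonoOn (fun z => exp (a * (d - z)) + a / b * exp (-b * (d - z))) (Ici d) := by
  refine strictMonoOn_of_deriv_pos (convex_Ici d) (by fun_prop) fun z hz => ?_
  rw [interior_Ici, mem_Ioi] at hz
  have hderiv : HasDerivAt (fun z => exp (a * (d - z)) + a / b * exp (-b * (d - z)))
      (a * (exp (-b * (d - z)) - exp (a * (d - z)))) z := by
    have h₁ := (((hasDerivAt_id z).const_sub d).const_mul a).exp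
    have h₂ := (((hasDerivAt_id z).const_sub d).const_mul (-b)).exp
    refine (h₁.add (h₂.const_mul (a / b))).congr_deriv ?_
    simp only [id]
    field_simp
    ring
  rw [hderiv.deriv]
  exact mul_pos ha (sub_pos.2 (exp_lt_exp.2 (by nlinarith)))

section Value

variable {μ σ r : ℝ}

lemma div_th2 (hσ : σ ≠ 0) (hr : 0 < r) (β u : ℝ) :
    β / th2 μ σ r u = β / r * (σ ^ 2 * th2 μ σ r u / 2 + (μ - u)) := by
  have := (th2_pos (μ := μ) hσ hr u).ne'
  rw [← r_div_th2 hσ hr u]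
  field_simp

lemma rhsC_strictMonoOn {u₀ β : ℝ} (hσ : σ ≠ 0) (hr : 0 < r) (hu₀ : 0 < u₀) (hβ : 0 < β)
    (d : ℝ) : StrictMonoOn (rhsC μ σ r u₀ β d) (Ici d) := by
  intro x hx y hy hxy
  have ha := th1_pos (μ := μ) hσ hr 0
  have hb := th2_pos (μ := μ) hσ hr 0
  have hg := strictMonoOn_exp_add_exp ha hb d hx hy hxy
  have he : exp (-th2 μ σ r 0 * (d - x)) < exp (-th2 μ σ r 0 * (d - y)) :=
    exp_lt_exp.2 (by nlinarith)
  have hgap := sub_pos.2 (th2_strictMono (μ := μ) hσ hr hu₀)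
  unfold rhsC
  gcongr

lemma rhsC_self (hσ : σ ≠ 0) (hr : 0 < r) (u₀ β d : ℝ) :
    rhsC μ σ r u₀ β d d = xi2 μ σ r u₀ β := by
  have ha := th1_pos (μ := μ) hσ hr 0
  have hb := th2_pos (μ := μ) hσ hr 0
  have hcoef : (th2 μ σ r u₀ - th2 μ σ r 0) / (th1 μ σ r 0 * (th1 μ σ r 0 + th2 μ σ r 0)) *
      (1 + th1 μ σ r 0 / th2 μ σ r 0) = (th2 μ σ r u₀ - th2 μ σ r 0) / (th1 μ σ r 0 * th2 μ σ r 0) := by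
    field_simp
    ring
  simp only [rhsC, xi2, sub_self, mul_zero, exp_zero, mul_one]
  rw [mul_assoc β, hcoef, th1_mul_th2 hσ hr.le, div_th2 hσ hr, div_th2 hσ hr]
  field_simp
  ring

end Value

theorem stmt18_general (μ σ r u₀ β d : ℝ) (hσ : 0 < σ) (hr : 0 < r) (hu₀ : 0 < u₀) (hβ : 0 < β) :
    StrictMonoOn (rhsC μ σ r u₀ β d) (Set.Ici d) ∧
    rhsC μ σ r u₀ β d d = xi2 μ σ r u₀ β :=
  ⟨rhsC_strictMonoOn hσ.ne' hr hu₀ hβ d, rhsC_self hσ.ne' hr u₀ β d⟩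

theorem stmt18 (μ σ r u₀ β d : ℝ) (hσ : 0 < σ) (hr : 0 < r) (hu₀ : 0 < u₀) (hβ : 0 < β)
    (hd : 0 < d) :
    StrictMonoOn (rhsC μ σ r u₀ β d) (Set.Ici d) ∧
    rhsC μ σ r u₀ β d d = xi2 μ σ r u₀ β :=
  stmt18_general μ σ r u₀ β d hσ hr hu₀ hβ
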